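/- arXiv:1507.02848 — 5 statements merged into one kernel-verified Lean document; each statement's English description precedes it below -/
import Mathlib

section
/- Let H be a Hilbert space and A, B closed subspaces. For any a ∈ A, the orthogonal projection of a onto the orthogonal complement of A ∩ B equals the strongly convergent sum over k ≥ 0 of P_B^⊥ (P_A^⊥ P_B^⊥)^k a − (P_A^⊥ P_B^⊥)^{k+1} a, where P_A^⊥ = I − P_A and P_B^⊥ = I − P_B are the projections onto the orthogonal complements of A and B. -/
/-!
For `a ∈ A` put `S = P_A P_B P_A` and `x k = S ^ k a`. Since `P_A a = a`, the idempotent relations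
turn the `k`-th summand into `x k - x (k + 1)`, so the partial sums telescope to `a - x n`.
The operator `S` is self-adjoint with `S ^ 2 ≤ S`, hence `t ↦ re ⟪a, S ^ t a⟫` is antitone and
nonnegative; `‖x m - x n‖ ^ 2` is a combination of its values, so `x` is Cauchy, and its limit is
the projection of `a` onto the fixed space of `S`, which is `A ⊓ B`. The convergence is
unconditional because `⟪x i - x (i + 1), x j - x (j + 1)⟫ = ⟪b, S ^ (i + j) b⟫` with `b = a - S a`
has nonnegative real part, so adding terms to a finite sum never decreases its norm.
-/

open scoped InnerProductSpace

/-- The orthogonal projection of `H` onto the closed subspace `K`, as a map `H →L[ℂ] H`. -/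
noncomputable def projCLM {H : Type*} [NormedAddCommGroup H] [InnerProductSpace ℂ H]
    (K : Submodule ℂ H) [K.HasOrthogonalProjection] : H →L[ℂ] H :=
  K.subtypeL.comp K.orthogonalProjectionOnto

open Filter Topology RCLike Finset

section Idempotents

variable {R : Type*} [Ring R] {p q : R}

theorem IsIdempotentElem.mul_pow_mul_mul_self (hp : IsIdempotentElem p) (k : ℕ) :
    p * ((p * q * p) ^ k * p) = (p * q * p) ^ k * p := by
  have hcomm : Commute p (p * q * p) := by
    simp only [Commute, SemiconjBy, ← mul_assoc, hp.eq, hp.mul_mul_self]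
  rw [← mul_assoc, (hcomm.pow_right k).eq, mul_assoc, hp.eq]

theorem IsIdempotentElem.one_sub_mul_one_sub_mul_one_sub_mul (hq : IsIdempotentElem q)
    {c : R} (hc : p * c = c) : (1 - q) * ((1 - p) * ((1 - q) * c)) = (1 - q) * (p * q * c) := by
  simp only [mul_sub, sub_mul, one_mul, mul_assoc, hc, hq.mul_self_mul]
  abel

theorem IsIdempotentElem.one_sub_mul_pow_mul (hp : IsIdempotentElem p) (hq : IsIdempotentElem q)
    (k : ℕ) : (1 - q) * (((1 - p) * (1 - q)) ^ k * p) = (1 - q) * ((p * q * p) ^ k * p) := by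
  induction k with
  | zero => simp
  | succ k ih =>
    have hc := hp.mul_pow_mul_mul_self (q := q) k
    calc (1 - q) * (((1 - p) * (1 - q)) ^ (k + 1) * p)
        = (1 - q) * ((1 - p) * ((1 - q) * (((1 - p) * (1 - q)) ^ k * p))) := by
          simp only [pow_succ', mul_assoc]
      _ = (1 - q) * (p * q * p * ((p * q * p) ^ k * p)) := by
          rw [ih, hq.one_sub_mul_one_sub_mul_one_sub_mul hc, mul_assoc (p * q), hc]
      _ = (1 - q) * ((p * q * p) ^ (k + 1) * p) := by rw [pow_succ', mul_assoc (p * q * p) _ p]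

theorem IsIdempotentElem.one_sub_mul_pow_sub_pow_succ_mul (hp : IsIdempotentElem p)
    (hq : IsIdempotentElem q) (k : ℕ) :
    ((1 - q) * ((1 - p) * (1 - q)) ^ k - ((1 - p) * (1 - q)) ^ (k + 1)) * p
      = ((p * q * p) ^ k - (p * q * p) ^ (k + 1)) * p := by
  have hc := hp.mul_pow_mul_mul_self (q := q) k
  calc ((1 - q) * ((1 - p) * (1 - q)) ^ k - ((1 - p) * (1 - q)) ^ (k + 1)) * p
      = p * ((1 - q) * (((1 - p) * (1 - q)) ^ k * p)) := by
        rw [pow_succ']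
        generalize ((1 - p) * (1 - q)) ^ k = X
        noncomm_ring
    _ = p * ((1 - q) * ((p * q * p) ^ k * p)) := by rw [hp.one_sub_mul_pow_mul hq]
    _ = ((p * q * p) ^ k - (p * q * p) ^ (k + 1)) * p := by
      rw [sub_mul ((p * q * p) ^ k), pow_succ', mul_assoc (p * q * p) _ p, mul_assoc (p * q) p, hc]
      generalize (p * q * p) ^ k * p = c at hc ⊢
      rw [one_sub_mul, mul_sub, hc, mul_assoc]

theorem IsIdempotentElem.mul_mul_self_sub_sq (hp : IsIdempotentElem p) (hq : IsIdempotentElem q) :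
    p * q * p - (p * q * p) ^ 2 = p * q * (1 - p) * (q * p) := by
  simp only [sq, mul_sub, sub_mul, mul_one, mul_assoc, hp.mul_self_mul, hq.mul_self_mul]

end Idempotents

section NonnegGram

variable {𝕜 E : Type*} [RCLike 𝕜] [NormedAddCommGroup E] [InnerProductSpace 𝕜 E]

theorem norm_sum_le_norm_sum_of_subset_of_re_inner_nonneg {ι : Type*} {f : ι → E}
    (hf : ∀ i j, 0 ≤ re ⟪f i, f j⟫_𝕜) {s t : Finset ι} (hst : s ⊆ t) :
    ‖∑ i ∈ s, f i‖ ≤ ‖∑ i ∈ t, f i‖ := by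
  classical
  have hcross : 0 ≤ re ⟪∑ i ∈ s, f i, ∑ j ∈ t \ s, f j⟫_𝕜 := by
    simp only [sum_inner, inner_sum, map_sum]
    exact sum_nonneg fun _ _ => sum_nonneg fun _ _ => hf _ _
  rw [← sum_sdiff hst, add_comm, ← sq_le_sq₀ (norm_nonneg _) (norm_nonneg _),
    norm_add_sq (𝕜 := 𝕜)]
  nlinarith [sq_nonneg ‖∑ j ∈ t \ s, f j‖]

theorem hasSum_of_re_inner_nonneg [CompleteSpace E] {f : ℕ → E} {x : E}
    (hf : ∀ i j, 0 ≤ re ⟪f i, f j⟫_𝕜)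
    (hx : Tendsto (fun n => ∑ i ∈ range n, f i) atTop (𝓝 x)) : HasSum f x := by
  refine (Summable.hasSum_iff_tendsto_nat ?_).2 hx
  refine summable_iff_vanishing_norm.2 fun ε hε => ?_
  obtain ⟨N, hN⟩ := Metric.cauchySeq_iff'.1 hx.cauchySeq ε hε
  refine ⟨range N, fun t ht => ?_⟩
  obtain ⟨M, htM⟩ := t.exists_nat_subset_range
  have hsub : t ⊆ range (max N M) \ range N :=
    subset_sdiff.2 ⟨htM.trans (range_subset_range.2 (le_max_right N M)), ht⟩
  calc ‖∑ i ∈ t, f i‖ ≤ ‖∑ i ∈ range (max N M) \ range N, f i‖ :=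
        norm_sum_le_norm_sum_of_subset_of_re_inner_nonneg hf hsub
    _ = dist (∑ i ∈ range (max N M), f i) (∑ i ∈ range N, f i) := by
        rw [dist_eq_norm, ← sum_sdiff (range_subset_range.2 (le_max_left N M)),
          add_sub_cancel_right]
    _ < ε := hN _ (le_max_left N M)

end NonnegGram

section PowersOfPositiveContraction

variable {𝕜 E : Type*} [RCLike 𝕜] [NormedAddCommGroup E] [InnerProductSpace 𝕜 E] [CompleteSpace E]
  {S : E →L[𝕜] E}

theorem IsSelfAdjoint.inner_pow_apply_pow_apply (hS : IsSelfAdjoint S) (a : E) (m n : ℕ) :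
    ⟪(S ^ m) a, (S ^ n) a⟫_𝕜 = ⟪a, (S ^ (m + n)) a⟫_𝕜 := by
  rw [pow_add, mul_apply_eq_comp]
  exact (hS.pow m).isSymmetric _ _

theorem IsSelfAdjoint.re_inner_pow_two_mul_apply (hS : IsSelfAdjoint S) (a : E) (p : ℕ) :
    re ⟪a, (S ^ (2 * p)) a⟫_𝕜 = ‖(S ^ p) a‖ ^ 2 := by
  rw [two_mul, ← hS.inner_pow_apply_pow_apply, inner_self_eq_norm_sq]

theorem IsSelfAdjoint.inner_pow_two_mul_add_one_apply (hS : IsSelfAdjoint S) (a : E) (p : ℕ) :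
    ⟪a, (S ^ (2 * p + 1)) a⟫_𝕜 = ⟪(S ^ p) a, S ((S ^ p) a)⟫_𝕜 := by
  rw [two_mul, add_assoc, ← hS.inner_pow_apply_pow_apply, pow_succ', mul_apply_eq_comp]

theorem IsSelfAdjoint.norm_sq_apply_le_re_inner_apply_self (hS : IsSelfAdjoint S)
    (hS2 : S ^ 2 ≤ S) (v : E) : ‖S v‖ ^ 2 ≤ re ⟪v, S v⟫_𝕜 := by
  have h := hS2.re_inner_nonneg_right v
  rwa [sub_apply, inner_sub_right, map_sub, sub_nonneg,
    ← hS.inner_pow_apply_pow_apply v 1 1, pow_one, inner_self_eq_norm_sq] at h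

theorem IsSelfAdjoint.re_inner_apply_self_le_norm_sq (hS : IsSelfAdjoint S)
    (hS2 : S ^ 2 ≤ S) (v : E) : re ⟪v, S v⟫_𝕜 ≤ ‖v‖ ^ 2 := by
  have h := hS.norm_sq_apply_le_re_inner_apply_self hS2 v
  have hcs : re ⟪v, S v⟫_𝕜 ≤ ‖v‖ * ‖S v‖ := re_inner_le_norm v (S v)
  nlinarith [norm_nonneg v, norm_nonneg (S v)]

theorem IsSelfAdjoint.re_inner_pow_apply_nonneg (hS : IsSelfAdjoint S) (hS2 : S ^ 2 ≤ S)
    (a : E) (t : ℕ) : 0 ≤ re ⟪a, (S ^ t) a⟫_𝕜 := by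
  obtain ⟨p, rfl | rfl⟩ := Nat.even_or_odd' t
  · rw [hS.re_inner_pow_two_mul_apply]
    positivity
  · rw [hS.inner_pow_two_mul_add_one_apply]
    exact (sq_nonneg _).trans (hS.norm_sq_apply_le_re_inner_apply_self hS2 _)

theorem IsSelfAdjoint.antitone_re_inner_pow_apply (hS : IsSelfAdjoint S) (hS2 : S ^ 2 ≤ S)
    (a : E) : Antitone fun t => re ⟪a, (S ^ t) a⟫_𝕜 := by
  refine antitone_nat_of_succ_le fun t => ?_
  obtain ⟨p, rfl | rfl⟩ := Nat.even_or_odd' t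
  · rw [hS.inner_pow_two_mul_add_one_apply, hS.re_inner_pow_two_mul_apply]
    exact hS.re_inner_apply_self_le_norm_sq hS2 _
  · rw [show 2 * p + 1 + 1 = 2 * (p + 1) by ring, hS.re_inner_pow_two_mul_apply,
      hS.inner_pow_two_mul_add_one_apply, pow_succ' S p, mul_apply_eq_comp]
    exact hS.norm_sq_apply_le_re_inner_apply_self hS2 _

theorem IsSelfAdjoint.cauchySeq_pow_apply (hS : IsSelfAdjoint S) (hS2 : S ^ 2 ≤ S) (a : E) :
    CauchySeq fun n => (S ^ n) a := by
  set d : ℕ → ℝ := fun t => re ⟪a, (S ^ t) a⟫_𝕜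
  have hd : Tendsto d atTop (𝓝 (⨅ t, d t)) :=
    tendsto_atTop_ciInf (hS.antitone_re_inner_pow_apply hS2 a)
      ⟨0, Set.forall_mem_range.2 (hS.re_inner_pow_apply_nonneg hS2 a)⟩
  have hdist : ∀ m n : ℕ,
      dist ((S ^ m) a) ((S ^ n) a) ^ 2 = d (m + m) - 2 * d (m + n) + d (n + n) := by
    intro m n
    simp only [d, dist_eq_norm, @norm_sub_sq 𝕜, ← hS.inner_pow_apply_pow_apply,
      inner_self_eq_norm_sq]
  have hfst : Tendsto (fun p : ℕ × ℕ => p.1) atTop atTop := by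
    rw [← prod_atTop_atTop_eq]; exact tendsto_fst
  have hsnd : Tendsto (fun p : ℕ × ℕ => p.2) atTop atTop := by
    rw [← prod_atTop_atTop_eq]; exact tendsto_snd
  have hsq : Tendsto (fun p : ℕ × ℕ => dist ((S ^ p.1) a) ((S ^ p.2) a) ^ 2) atTop (𝓝 0) := by
    simp_rw [hdist]
    have hlim := ((hd.comp (hfst.atTop_add_atTop hfst)).sub
      ((hd.comp (hfst.atTop_add_atTop hsnd)).const_mul 2)).add (hd.comp (hsnd.atTop_add_atTop hsnd))
    rwa [show (⨅ t, d t) - 2 * (⨅ t, d t) + ⨅ t, d t = 0 by ring] at hlim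
  rw [cauchySeq_iff_tendsto_dist_atTop_0]
  simpa [Real.sqrt_sq dist_nonneg] using hsq.sqrt

theorem IsSelfAdjoint.tendsto_pow_apply_starProjection (hS : IsSelfAdjoint S) (hS2 : S ^ 2 ≤ S)
    {K : Submodule 𝕜 E} [K.HasOrthogonalProjection] (hK : ∀ v, v ∈ K ↔ S v = v) (a : E) :
    Tendsto (fun n => (S ^ n) a) atTop (𝓝 (K.starProjection a)) := by
  obtain ⟨b, hb⟩ := cauchySeq_tendsto_of_complete (hS.cauchySeq_pow_apply hS2 a)
  have hbK : b ∈ K := by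
    refine (hK b).2 (tendsto_nhds_unique ((S.continuous.tendsto b).comp hb) ?_)
    simpa only [Function.comp_def, pow_succ', mul_apply_eq_comp] using
      hb.comp (tendsto_add_atTop_nat 1)
  have horth : ∀ w ∈ K, ⟪a - b, w⟫_𝕜 = 0 := by
    intro w hw
    have hconst : ∀ n, ⟪(S ^ n) a, w⟫_𝕜 = ⟪a, w⟫_𝕜 := fun n => calc
      ⟪(S ^ n) a, w⟫_𝕜 = ⟪a, (S ^ n) w⟫_𝕜 := (hS.pow n).isSymmetric a w
      _ = ⟪a, w⟫_𝕜 := by rw [pow_apply_eq_iterate, Function.iterate_fixed ((hK w).1 hw)]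
    have hlim := hb.inner (𝕜 := 𝕜) (tendsto_const_nhds (x := w))
    simp only [hconst, tendsto_const_nhds_iff] at hlim
    rw [inner_sub_left, hlim, sub_self]
  rwa [K.eq_starProjection_of_mem_of_inner_eq_zero hbK horth]

theorem IsSelfAdjoint.hasSum_pow_apply_sub_pow_succ_apply (hS : IsSelfAdjoint S)
    (hS2 : S ^ 2 ≤ S) {K : Submodule 𝕜 E} [K.HasOrthogonalProjection]
    (hK : ∀ v, v ∈ K ↔ S v = v) (a : E) :
    HasSum (fun k => (S ^ k) a - (S ^ (k + 1)) a) (a - K.starProjection a) := by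
  have hdiff : ∀ k, (S ^ k) a - (S ^ (k + 1)) a = (S ^ k) (a - S a) := fun k => by
    rw [map_sub, pow_succ, mul_apply_eq_comp]
  refine hasSum_of_re_inner_nonneg (𝕜 := 𝕜) (fun i j => ?_) ?_
  · rw [hdiff, hdiff, hS.inner_pow_apply_pow_apply]
    exact hS.re_inner_pow_apply_nonneg hS2 _ _
  · simp only [sum_range_sub', pow_zero, one_apply_eq_self]
    exact tendsto_const_nhds.sub (hS.tendsto_pow_apply_starProjection hS2 hK a)

end PowersOfPositiveContraction

section TwoProjections

variable {𝕜 E : Type*} [RCLike 𝕜] [NormedAddCommGroup E] [InnerProductSpace 𝕜 E]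
  (A B : Submodule 𝕜 E) [A.HasOrthogonalProjection] [B.HasOrthogonalProjection]

theorem isSelfAdjoint_starProjection_mul_mul [CompleteSpace E] :
    IsSelfAdjoint (A.starProjection * B.starProjection * A.starProjection) :=
  (isSelfAdjoint_starProjection B).conjugate_self (isSelfAdjoint_starProjection A)

theorem starProjection_mul_mul_sq_le [CompleteSpace E] :
    (A.starProjection * B.starProjection * A.starProjection) ^ 2
      ≤ A.starProjection * B.starProjection * A.starProjection := by
  have hadj : ContinuousLinearMap.adjoint (B.starProjection * A.starProjection)
      = A.starProjection * B.starProjection := by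
    rw [← ContinuousLinearMap.star_eq_adjoint, star_mul, (isSelfAdjoint_starProjection A).star_eq,
      (isSelfAdjoint_starProjection B).star_eq]
  rw [ContinuousLinearMap.le_def, A.isIdempotentElem_starProjection.mul_mul_self_sub_sq
    B.isIdempotentElem_starProjection, ← Submodule.starProjection_orthogonal', ← hadj]
  have h := (ContinuousLinearMap.IsPositive.of_isStarProjection
    (isStarProjection_starProjection (U := Aᗮ))).adjoint_conj (B.starProjection * A.starProjection)
  rwa [← ContinuousLinearMap.mul_def, ← ContinuousLinearMap.mul_def, ← mul_assoc] at h

theorem starProjection_mul_mul_apply_eq_self_iff {v : E} :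
    (A.starProjection * B.starProjection * A.starProjection) v = v ↔ v ∈ A ⊓ B := by
  refine ⟨fun h => ?_, fun h => ?_⟩
  · have hvA : v ∈ A := h ▸ A.starProjection_apply_mem _
    rw [mul_apply_eq_comp, mul_apply_eq_comp, A.starProjection_eq_self_iff.2 hvA] at h
    have hle : ‖v‖ ≤ ‖B.starProjection v‖ := calc
      ‖v‖ = ‖A.starProjection (B.starProjection v)‖ := by rw [h]
      _ ≤ ‖B.starProjection v‖ := A.norm_starProjection_apply_le _
    exact ⟨hvA, (B.mem_iff_norm_starProjection v).2
      (le_antisymm (B.norm_starProjection_apply_le v) hle)⟩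
  · rw [mul_apply_eq_comp, mul_apply_eq_comp, A.starProjection_eq_self_iff.2 h.1,
      B.starProjection_eq_self_iff.2 h.2, A.starProjection_eq_self_iff.2 h.1]

end TwoProjections

theorem projCLM_eq_starProjection {H : Type*} [NormedAddCommGroup H] [InnerProductSpace ℂ H]
    (K : Submodule ℂ H) [K.HasOrthogonalProjection] : projCLM K = K.starProjection :=
  rfl

theorem alternating_projection_rep_general {H : Type*} [NormedAddCommGroup H]
    [InnerProductSpace ℂ H] [CompleteSpace H] (A B : Submodule ℂ H)
    [CompleteSpace A] [CompleteSpace B] [CompleteSpace ↥(A ⊓ B)]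
    (a : H) (ha : a ∈ A) :
    HasSum
      (fun k : ℕ =>
        (1 - projCLM B) ((((1 - projCLM A) * (1 - projCLM B)) ^ k) a)
          - (((1 - projCLM A) * (1 - projCLM B)) ^ (k + 1)) a)
      ((1 - projCLM (A ⊓ B)) a) := by
  simp only [projCLM_eq_starProjection]
  have hfix (v : H) :
      v ∈ A ⊓ B ↔ (A.starProjection * B.starProjection * A.starProjection) v = v :=
    (starProjection_mul_mul_apply_eq_self_iff A B).symm
  have hsum := (isSelfAdjoint_starProjection_mul_mul A B).hasSum_pow_apply_sub_pow_succ_apply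
    (starProjection_mul_mul_sq_le A B) hfix a
  rw [sub_apply, one_apply_eq_self]
  convert hsum using 1
  funext k
  have h := DFunLike.congr_fun (A.isIdempotentElem_starProjection.one_sub_mul_pow_sub_pow_succ_mul
    B.isIdempotentElem_starProjection k) a
  simpa only [sub_apply, mul_apply_eq_comp, A.starProjection_eq_self_iff.2 ha] using h

theorem alternating_projection_rep {H : Type*} [NormedAddCommGroup H]
    [InnerProductSpace ℂ H] [CompleteSpace H] (A B : Submodule ℂ H)
    (hA : IsClosed (A : Set H)) (hB : IsClosed (B : Set H))
    [CompleteSpace A] [CompleteSpace B] [CompleteSpace ↥(A ⊓ B)]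
    (a : H) (ha : a ∈ A) :
    HasSum
      (fun k : ℕ =>
        (1 - projCLM B) ((((1 - projCLM A) * (1 - projCLM B)) ^ k) a)
          - (((1 - projCLM A) * (1 - projCLM B)) ^ (k + 1)) a)
      ((1 - projCLM (A ⊓ B)) a) :=
  alternating_projection_rep_general A B a ha
end

section
/- For a ∈ A with A, B closed subspaces of a Hilbert space H, and for every k ≥ 0, we have P_A^⊥ P_B (P_A P_B)^k a = −(P_A^⊥ P_B^⊥)^{k+1} a. -/
namespace IsIdempotentElem

variable {R : Type*} [Ring R] {p s : R}

theorem one_sub_mul_mul_self_eq_neg (hp : IsIdempotentElem p) :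
    (1 - p) * s * p = -((1 - p) * (1 - s) * p) := by
  rw [eq_neg_iff_add_eq_zero, ← add_mul, ← mul_add, add_sub_cancel, mul_one, hp.one_sub_mul_self]

theorem semiconjBy_one_sub_mul (hp : IsIdempotentElem p) (hs : IsIdempotentElem s) :
    SemiconjBy ((1 - p) * s) (p * s) ((1 - p) * (1 - s)) := by
  unfold SemiconjBy
  symm
  calc (1 - p) * (1 - s) * ((1 - p) * s)
      = ((1 - p) * (1 - s) + (1 - p) * s * p) * s := by
        rw [hp.one_sub_mul_mul_self_eq_neg]; noncomm_ring
    _ = (1 - p) * ((1 - s) * s) + (1 - p) * s * (p * s) := by noncomm_ring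
    _ = (1 - p) * s * (p * s) := by rw [hs.one_sub_mul_self, mul_zero, zero_add]

end IsIdempotentElem

section projCLM

variable {H : Type*} [NormedAddCommGroup H] [InnerProductSpace ℂ H]
  (K : Submodule ℂ H) [K.HasOrthogonalProjection]

theorem isIdempotentElem_projCLM : IsIdempotentElem (projCLM K) :=
  K.isIdempotentElem_starProjection

theorem projCLM_apply_of_mem {x : H} (hx : x ∈ K) : projCLM K x = x :=
  K.starProjection_eq_self_iff.mpr hx

end projCLM

theorem proj_identity_pow_general {H : Type*} [NormedAddCommGroup H]
    [InnerProductSpace ℂ H] (A B : Submodule ℂ H)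
    [CompleteSpace A] [CompleteSpace B]
    (a : H) (ha : a ∈ A) (k : ℕ) :
    (1 - projCLM A) (projCLM B (((projCLM A * projCLM B) ^ k) a)) =
      -((((1 - projCLM A) * (1 - projCLM B)) ^ (k + 1)) a) := by
  have hp := isIdempotentElem_projCLM A
  have hintertwine := (hp.semiconjBy_one_sub_mul (isIdempotentElem_projCLM B)).pow_right k
  have hpa : projCLM A a = a := projCLM_apply_of_mem A ha
  set p := projCLM A
  set s := projCLM B
  calc (1 - p) (s (((p * s) ^ k) a))
      = ((1 - p) * s * (p * s) ^ k) (p a) := by rw [hpa]; rfl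
    _ = (((1 - p) * (1 - s)) ^ k * ((1 - p) * s * p)) a := by
        rw [hintertwine.eq, mul_assoc _ _ p]; rfl
    _ = -((((1 - p) * (1 - s)) ^ (k + 1)) (p a)) := by
        rw [hp.one_sub_mul_mul_self_eq_neg, mul_neg, ← mul_assoc, ← pow_succ]; rfl
    _ = -((((1 - p) * (1 - s)) ^ (k + 1)) a) := by rw [hpa]

theorem proj_identity_pow {H : Type*} [NormedAddCommGroup H]
    [InnerProductSpace ℂ H] [CompleteSpace H] (A B : Submodule ℂ H)
    (hA : IsClosed (A : Set H)) (hB : IsClosed (B : Set H))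
    [CompleteSpace A] [CompleteSpace B]
    (a : H) (ha : a ∈ A) (k : ℕ) :
    (1 - projCLM A) (projCLM B (((projCLM A * projCLM B) ^ k) a)) =
      -((((1 - projCLM A) * (1 - projCLM B)) ^ (k + 1)) a) :=
  proj_identity_pow_general A B a ha k
end

section
/- For d ∈ (−1/2, 1/2) \ {0}, let u_n = Γ(n+1−2d)Γ(n+1)/Γ(n+1−d)² for n ≥ 0. Then u_n = 1 + d²/n + O(n⁻²) as n → ∞. -/
/-! The ratio `u (n+1) / u n = (n+1-2d)(n+1)/(n+1-d)²` is rational in `n`, and comparing it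
with the ratios of `L n = 1 + d²/(n+2)` and `U n = 1 + d²/(n-2)` shows that `u n / L n`
decreases and `u n / U n` increases for `n ≥ 3`. Since `u n → 1` by Euler's limit formula for
`Γ`, this squeezes `L n ≤ u n ≤ U n`, and both bounds are `1 + d²/n + O(n⁻²)`. -/

open Filter Asymptotics Topology Finset

namespace Real

theorem Gamma_add_nat_eq_mul_prod {s : ℝ} (hs : 0 < s) (n : ℕ) :
    Gamma (s + n) = Gamma s * ∏ j ∈ range n, (s + j) := by
  induction n with
  | zero => simp
  | succ n ih =>
    rw [Nat.cast_succ, ← add_assoc, Gamma_add_one (by positivity), ih, prod_range_succ]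
    ring

theorem rpow_mul_Gamma_div_Gamma_add_eq_GammaSeq {s : ℝ} (hs : -1 < s) {n : ℕ} (hn : n ≠ 0) :
    (n : ℝ) ^ s * Gamma (n + 1) / Gamma (n + 1 + s) =
      GammaSeq (s + 1) n / Gamma (s + 1) * (1 + (1 + s) / n) := by
  have hs' : 0 < s + 1 := by linarith
  have hn' : (0 : ℝ) < n := by positivity
  have hΓs := (Gamma_pos_of_pos hs').ne'
  have hpos : 0 < (n : ℝ) + 1 + s := by linarith
  have hΓn := (Gamma_pos_of_pos hpos).ne'
  have hprod :
      ∏ j ∈ range (n + 1), (s + 1 + j) = (n + 1 + s) * Gamma (n + 1 + s) / Gamma (s + 1) := by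
    rw [eq_div_iff hΓs, mul_comm, ← Gamma_add_nat_eq_mul_prod hs',
      ← Gamma_add_one (by linarith)]
    push_cast; ring_nf
  rw [GammaSeq, hprod, Gamma_nat_eq_factorial, rpow_add_one hn'.ne']
  field_simp [hpos.ne']
  ring

theorem tendsto_rpow_mul_Gamma_div_Gamma_add {s : ℝ} (hs : -1 < s) :
    Tendsto (fun n : ℕ => (n : ℝ) ^ s * Gamma (n + 1) / Gamma (n + 1 + s)) atTop (𝓝 1) := by
  have hΓ : Gamma (s + 1) ≠ 0 := (Gamma_pos_of_pos (by linarith)).ne'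
  have hseq := ((GammaSeq_tendsto_Gamma (s + 1)).div_const (Gamma (s + 1))).mul
    ((tendsto_const_div_atTop_nhds_zero_nat (1 + s)).const_add 1)
  rw [div_self hΓ, add_zero, mul_one] at hseq
  refine hseq.congr' ?_
  filter_upwards [eventually_ne_atTop 0] with n hn
  exact (rpow_mul_Gamma_div_Gamma_add_eq_GammaSeq hs hn).symm

end Real

open Real

-- At `x = n`, `(x + 1 - 2 * d) * (x + 1) / (x + 1 - d) ^ 2` is `u (n + 1) / u n`.
section StepInequalities

variable {x d : ℝ}

theorem step_ratio_mul_one_add_div_le (hx : 0 ≤ x) (hd : d < 1) :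
    (x + 1 - 2 * d) * (x + 1) / (x + 1 - d) ^ 2 * (1 + d ^ 2 / (x + 2)) ≤
      1 + d ^ 2 / (x + 3) := by
  have hxd : 0 < x + 1 - d := by linarith
  rw [one_add_div (by positivity), one_add_div (by positivity), div_mul_div_comm,
    div_le_div_iff₀ (by positivity) (by positivity)]
  have hcoef : 0 ≤ x * (3 + 2 * d + d ^ 2) + (5 + 2 * d + 2 * d ^ 2) := by
    nlinarith [mul_nonneg hx (add_nonneg (sq_nonneg (d + 1)) zero_le_two), sq_nonneg (d + 1 / 2)]
  nlinarith [mul_nonneg (sq_nonneg d) hcoef]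

theorem one_add_div_le_step_ratio_mul (hx : 3 ≤ x) (hd : -1 ≤ d) (hd' : d ≤ 1) :
    1 + d ^ 2 / (x - 1) ≤
      (x + 1 - 2 * d) * (x + 1) / (x + 1 - d) ^ 2 * (1 + d ^ 2 / (x - 2)) := by
  have hxd : 0 < x + 1 - d := by linarith
  have hx1 : 0 < x - 1 := by linarith
  have hx2 : 0 < x - 2 := by linarith
  rw [one_add_div hx1.ne', one_add_div hx2.ne', div_mul_div_comm,
    div_le_div_iff₀ hx1 (by positivity)]
  have hcoef : 0 ≤ x * (5 - 2 * d - d ^ 2) + (2 * d ^ 2 - 2 * d - 1) := by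
    nlinarith [mul_nonneg (sub_nonneg.2 hx) (show 0 ≤ 5 - 2 * d - d ^ 2 by nlinarith)]
  nlinarith [mul_nonneg (sq_nonneg d) hcoef]

theorem abs_sub_one_add_div_le {c y : ℝ} (hc : 0 ≤ c) (hx : 4 ≤ x)
    (hlow : 1 + c / (x + 2) ≤ y) (hup : y ≤ 1 + c / (x - 2)) :
    |y - (1 + c / x)| ≤ 4 * c * (x ^ 2)⁻¹ := by
  have hx0 : 0 < x := by linarith
  have hx2 : 0 < x - 2 := by linarith
  have hup' : c / (x - 2) - c / x ≤ 4 * c * (x ^ 2)⁻¹ := by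
    rw [div_sub_div _ _ hx2.ne' hx0.ne', ← div_eq_mul_inv,
      div_le_div_iff₀ (by positivity) (by positivity)]
    nlinarith [mul_nonneg (mul_nonneg hc hx0.le) (sub_nonneg.2 hx)]
  have hlow' : c / x - c / (x + 2) ≤ 4 * c * (x ^ 2)⁻¹ := by
    rw [div_sub_div _ _ hx0.ne' (by positivity), ← div_eq_mul_inv,
      div_le_div_iff₀ (by positivity) (by positivity)]
    nlinarith [mul_nonneg hc hx0.le, mul_nonneg hc (sq_nonneg x)]
  rw [abs_le]
  constructor <;> linarith

end StepInequalities

noncomputable def farimaPredErr (d : ℝ) (n : ℕ) : ℝ :=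
  Gamma (n + 1 - 2 * d) * Gamma (n + 1) / Gamma (n + 1 - d) ^ 2

section FarimaPredErr

variable {d : ℝ}

theorem farimaPredErr_pos (hd : d < 1 / 2) (n : ℕ) : 0 < farimaPredErr d n := by
  have hn : (0 : ℝ) ≤ n := n.cast_nonneg
  have := Gamma_pos_of_pos (show (0 : ℝ) < n + 1 - 2 * d by linarith)
  have := Gamma_pos_of_pos (show (0 : ℝ) < n + 1 - d by linarith)
  have := Gamma_pos_of_pos (show (0 : ℝ) < n + 1 by linarith)
  unfold farimaPredErr
  positivity

theorem farimaPredErr_succ (hd : d < 1 / 2) (n : ℕ) :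
    farimaPredErr d (n + 1) =
      (n + 1 - 2 * d) * (n + 1) / (n + 1 - d) ^ 2 * farimaPredErr d n := by
  have hn : (0 : ℝ) ≤ n := n.cast_nonneg
  have h2d : (n : ℝ) + 1 - 2 * d ≠ 0 := by linarith
  have hd' : (n : ℝ) + 1 - d ≠ 0 := by linarith
  have h1 : (n : ℝ) + 1 ≠ 0 := by linarith
  have hΓ := (Gamma_pos_of_pos (show (0 : ℝ) < n + 1 - d by linarith)).ne'
  have e2d : ((n + 1 : ℕ) : ℝ) + 1 - 2 * d = (n + 1 - 2 * d) + 1 := by push_cast; ring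
  have ed : ((n + 1 : ℕ) : ℝ) + 1 - d = (n + 1 - d) + 1 := by push_cast; ring
  have e1 : ((n + 1 : ℕ) : ℝ) + 1 = (n + 1) + 1 := by push_cast; ring
  rw [farimaPredErr, farimaPredErr, e2d, ed, e1, Gamma_add_one h2d, Gamma_add_one hd',
    Gamma_add_one h1]
  field_simp

theorem tendsto_farimaPredErr (hd : d < 1 / 2) : Tendsto (farimaPredErr d) atTop (𝓝 1) := by
  have hA := tendsto_rpow_mul_Gamma_div_Gamma_add (s := -d) (by linarith)
  have hB := tendsto_rpow_mul_Gamma_div_Gamma_add (s := -(2 * d)) (by linarith)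
  have hlim := (hA.mul hA).div hB one_ne_zero
  rw [mul_one, div_one] at hlim
  refine hlim.congr' ?_
  filter_upwards [eventually_ne_atTop 0] with n hn
  have hn' : (0 : ℝ) < n := by positivity
  have hpow : (n : ℝ) ^ (-(2 * d)) = (n : ℝ) ^ (-d) * (n : ℝ) ^ (-d) := by
    rw [← rpow_add hn']; ring_nf
  have := (rpow_pos_of_pos hn' (-d)).ne'
  have := (Gamma_pos_of_pos (show (0 : ℝ) < n + 1 - d by linarith)).ne'
  have := (Gamma_pos_of_pos (show (0 : ℝ) < n + 1 - 2 * d by linarith)).ne'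
  have := (Gamma_pos_of_pos (show (0 : ℝ) < n + 1 by linarith)).ne'
  simp only [Pi.div_apply, farimaPredErr, hpow, ← sub_eq_add_neg]
  field_simp

theorem one_add_sq_div_le_farimaPredErr (hd : d < 1 / 2) (n : ℕ) :
    1 + d ^ 2 / (n + 2) ≤ farimaPredErr d n := by
  set L : ℕ → ℝ := fun n => 1 + d ^ 2 / (n + 2)
  have hL : ∀ n, 0 < L n := fun n => by positivity
  have hanti : Antitone fun n => farimaPredErr d n / L n := by
    refine antitone_nat_of_succ_le fun m => ?_
    rw [div_le_div_iff₀ (hL _) (hL _), farimaPredErr_succ hd, mul_right_comm]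
    have hstep := step_ratio_mul_one_add_div_le m.cast_nonneg (show d < 1 by linarith)
    push_cast [L] at hstep ⊢
    rw [show (m : ℝ) + 1 + 2 = m + 3 by ring]
    exact (mul_le_mul_of_nonneg_right hstep (farimaPredErr_pos hd m).le).trans_eq (mul_comm _ _)
  have hlim : Tendsto (fun n => farimaPredErr d n / L n) atTop (𝓝 1) := by
    simpa [L, Pi.div_def] using (tendsto_farimaPredErr hd).div
      (((tendsto_const_div_atTop_nhds_zero_nat (d ^ 2)).comp (tendsto_add_atTop_nat 2)).const_add 1)
      (by norm_num)
  exact (one_le_div (hL n)).1 (hanti.le_of_tendsto hlim n)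

theorem farimaPredErr_le_one_add_sq_div (hd : d < 1 / 2) (hd' : -1 ≤ d) {n : ℕ} (hn : 3 ≤ n) :
    farimaPredErr d n ≤ 1 + d ^ 2 / (n - 2) := by
  set U : ℕ → ℝ := fun k => 1 + d ^ 2 / (k + 1)
  have hU : ∀ k, 0 < U k := fun k => by positivity
  have hmono : Monotone fun k => farimaPredErr d (k + 3) / U k := by
    refine monotone_nat_of_le_succ fun k => ?_
    rw [div_le_div_iff₀ (hU _) (hU _), show k + 1 + 3 = k + 3 + 1 by ring,
      farimaPredErr_succ hd (k + 3)]
    have hstep := one_add_div_le_step_ratio_mul (x := (k + 3 : ℕ)) (by simp) hd' (by linarith)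
    push_cast [U] at hstep ⊢
    rw [show (k : ℝ) + 3 - 1 = k + 1 + 1 by ring, show (k : ℝ) + 3 - 2 = k + 1 by ring] at hstep
    exact (mul_le_mul_of_nonneg_left hstep (farimaPredErr_pos hd _).le).trans_eq (by ring)
  have hlim : Tendsto (fun k => farimaPredErr d (k + 3) / U k) atTop (𝓝 1) := by
    simpa [U, Pi.div_def] using ((tendsto_farimaPredErr hd).comp (tendsto_add_atTop_nat 3)).div
      (((tendsto_const_div_atTop_nhds_zero_nat (d ^ 2)).comp (tendsto_add_atTop_nat 1)).const_add 1)
      (by norm_num)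
  obtain ⟨k, rfl⟩ := Nat.exists_eq_add_of_le' hn
  have := (div_le_one (hU k)).1 (hmono.ge_of_tendsto hlim k)
  push_cast [U] at this ⊢
  rwa [show (k : ℝ) + 3 - 2 = k + 1 by ring]

end FarimaPredErr

theorem farima_prediction_error_asymp_general (d : ℝ) (hd : d ∈ Set.Ioo (-(1/2) : ℝ) (1/2)) :
    (fun n : ℕ =>
        Real.Gamma (n + 1 - 2*d) * Real.Gamma (n + 1) / (Real.Gamma (n + 1 - d))^2
          - (1 + d^2 / n)) =O[atTop] (fun n : ℕ => ((n : ℝ)^2)⁻¹) := by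
  obtain ⟨hd₁, hd₂⟩ := hd
  refine IsBigO.of_bound (4 * d ^ 2) ?_
  filter_upwards [eventually_ge_atTop 4] with n hn
  have hn' : (4 : ℝ) ≤ n := by exact_mod_cast hn
  rw [Real.norm_eq_abs, Real.norm_of_nonneg (by positivity)]
  exact abs_sub_one_add_div_le (sq_nonneg d) hn' (one_add_sq_div_le_farimaPredErr hd₂ n)
    (farimaPredErr_le_one_add_sq_div hd₂ (by linarith) (by omega))

theorem farima_prediction_error_asymp (d : ℝ) (hd : d ∈ Set.Ioo (-(1/2) : ℝ) (1/2))
    (hd0 : d ≠ 0) :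
    (fun n : ℕ =>
        Real.Gamma (n + 1 - 2*d) * Real.Gamma (n + 1) / (Real.Gamma (n + 1 - d))^2
          - (1 + d^2 / n)) =O[atTop] (fun n : ℕ => ((n : ℝ)^2)⁻¹) :=
  farima_prediction_error_asymp_general d hd
end

section
/- Let d ∈ (−1/2, 1/2) \ {0}, and define ρ_n = sin(πd)/(π(n−d)) for n ∈ ℤ. Then for θ ∈ (−π, π) \ {0}, define Ω(e^{iθ}) = e^{id(θ−π)} if 0 < θ < π and Ω(e^{iθ}) = e^{id(θ+π)} if −π < θ < 0. We have −(1/2π) ∫_{−π}^{π} e^{−inθ} Ω(e^{iθ}) dθ = ρ_n for every n ∈ ℤ. -/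
/-!
On each half of `(-π, π]` the integrand is `exp (i (d - n) θ)` times the constant
`exp (∓ i π d)`, so both halves integrate in closed form. The boundary terms at `±π` both carry
the factor `(-1)^n` and cancel, leaving
`(exp (i π d) - exp (-i π d)) / (i (d - n)) = 2 sin (π d) / (d - n)`.
-/

open Real MeasureTheory
open scoped Interval

theorem intervalIntegral.integral_ite_lt {E : Type*} [NormedAddCommGroup E] [NormedSpace ℝ E]
    {f g : ℝ → E} {a b t : ℝ} (hat : a ≤ t) (htb : t ≤ b)
    (hg : IntervalIntegrable g volume a t) (hf : IntervalIntegrable f volume t b) :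
    ∫ x in a..b, (if t < x then f x else g x) = (∫ x in a..t, g x) + ∫ x in t..b, f x := by
  have hleft : (fun x => if t < x then f x else g x) =ᵐ[volume.restrict (Ι a t)] g := by
    refine Filter.eventuallyEq_of_mem (ae_restrict_mem measurableSet_uIoc) fun x hx => ?_
    rw [Set.uIoc_of_le hat] at hx
    exact if_neg hx.2.not_gt
  have hright : (fun x => if t < x then f x else g x) =ᵐ[volume.restrict (Ι t b)] f := by
    refine Filter.eventuallyEq_of_mem (ae_restrict_mem measurableSet_uIoc) fun x hx => ?_
    rw [Set.uIoc_of_le htb] at hx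
    exact if_pos hx.1
  rw [← integral_add_adjacent_intervals (hg.congr_ae hleft.symm) (hf.congr_ae hright.symm),
    integral_congr_ae_restrict hleft, integral_congr_ae_restrict hright]

theorem integral_exp_mul_complex_mul_const {a b : ℝ} {c : ℂ} (hc : c ≠ 0) (w : ℂ) :
    ∫ x in a..b, Complex.exp (c * x) * w =
      (Complex.exp (c * b) - Complex.exp (c * a)) / c * w := by
  rw [intervalIntegral.integral_mul_const, integral_exp_mul_complex hc]

theorem Complex.exp_mul_I_sub_exp_neg_mul_I (x : ℂ) :
    Complex.exp (x * Complex.I) - Complex.exp (-(x * Complex.I)) =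
      2 * Complex.I * Complex.sin x := by
  rw [mul_comm 2, mul_assoc, Complex.two_sin]
  ring_nf
  rw [Complex.I_sq]
  ring

theorem Real.ne_intCast_of_mem_Ioo_of_ne_zero {d : ℝ} (hd : d ∈ Set.Ioo (-1 : ℝ) 1)
    (hd0 : d ≠ 0) (n : ℤ) : d ≠ n := by
  rintro rfl
  have : n = 0 := Int.abs_lt_one_iff.mp (by exact_mod_cast abs_lt.mpr hd)
  exact hd0 (by simp [this])

theorem phase_integrand_eq (d : ℝ) (n : ℤ) (θ : ℝ) :
    Complex.exp (-(n : ℂ) * θ * Complex.I) *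
        (if 0 < θ then Complex.exp (Complex.I * d * ((θ : ℂ) - π))
         else Complex.exp (Complex.I * d * ((θ : ℂ) + π))) =
      if 0 < θ then Complex.exp (Complex.I * (d - n) * θ) * Complex.exp (-(π * d * Complex.I))
      else Complex.exp (Complex.I * (d - n) * θ) * Complex.exp (π * d * Complex.I) := by
  split_ifs <;> rw [← Complex.exp_add, ← Complex.exp_add] <;> ring_nf

theorem integral_exp_neg_mul_phase {d : ℝ} {n : ℤ} (hdn : (d : ℂ) ≠ n) :
    ∫ θ in (-π)..π, Complex.exp (-(n : ℂ) * θ * Complex.I) *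
        (if 0 < θ then Complex.exp (Complex.I * d * ((θ : ℂ) - π))
         else Complex.exp (Complex.I * d * ((θ : ℂ) + π))) =
      2 * Complex.sin (π * d) / (d - n) := by
  set c : ℂ := Complex.I * (d - n) with hc_def
  have hc : c ≠ 0 := mul_ne_zero Complex.I_ne_zero (sub_ne_zero.mpr hdn)
  simp_rw [phase_integrand_eq]
  rw [intervalIntegral.integral_ite_lt (neg_nonpos.2 pi_pos.le) pi_pos.le
      ((by fun_prop : Continuous _).intervalIntegrable _ _)
      ((by fun_prop : Continuous _).intervalIntegrable _ _),
    integral_exp_mul_complex_mul_const hc, integral_exp_mul_complex_mul_const hc]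
  have hexp_pi : Complex.exp (c * π) = Complex.exp (π * d * Complex.I) * (-1) ^ n := by
    rw [show c * π = π * d * Complex.I + n * (-(π * Complex.I)) by rw [hc_def]; ring,
      Complex.exp_add, Complex.exp_int_mul, Complex.exp_neg_pi_mul_I]
  have hexp_neg_pi : Complex.exp (c * ((-π : ℝ) : ℂ)) =
      Complex.exp (-(π * d * Complex.I)) * (-1) ^ n := by
    rw [show c * ((-π : ℝ) : ℂ) = -(π * d * Complex.I) + n * (π * Complex.I) by
        rw [hc_def]; push_cast; ring,
      Complex.exp_add, Complex.exp_int_mul, Complex.exp_pi_mul_I]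
  rw [hexp_pi, hexp_neg_pi, Complex.ofReal_zero, mul_zero, Complex.exp_zero, hc_def]
  field_simp
  linear_combination Complex.exp_mul_I_sub_exp_neg_mul_I (π * d)

theorem phase_fourier_coeff (d : ℝ) (hd : d ∈ Set.Ioo (-(1/2) : ℝ) (1/2)) (hd0 : d ≠ 0)
    (n : ℤ) :
    -(1 / (2 * (π : ℂ))) *
        ∫ θ in (-π)..π,
          Complex.exp (-(n : ℂ) * θ * Complex.I) *
            (if 0 < θ then Complex.exp (Complex.I * d * ((θ : ℂ) - π))
             else Complex.exp (Complex.I * d * ((θ : ℂ) + π)))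
      = ((Real.sin (π * d) / (π * ((n : ℝ) - d)) : ℝ) : ℂ) := by
  have hdn : (d : ℂ) ≠ n := by
    exact_mod_cast
      Real.ne_intCast_of_mem_Ioo_of_ne_zero ⟨by linarith [hd.1], by linarith [hd.2]⟩ hd0 n
  have hdn' : (d : ℂ) - n ≠ 0 := sub_ne_zero.mpr hdn
  rw [integral_exp_neg_mul_phase hdn]
  push_cast
  field_simp
  ring
end

section
/- Let d ∈ (−1/2, 1/2) \ {0} and ρ_n = sin(πd)/(π(n−d)). Let (s_k)_{k∈ℤ} be a complex sequence with ∑_{k∈ℤ} k² |s_k| < ∞. Then lim_{n→∞} n (ρ_n^{−1} ∑_{k∈ℤ} ρ_{n−k} s_k − ∑_{k∈ℤ} s_k) = ∑_{k∈ℤ} k s_k. -/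
open Filter Topology

/-!
Writing `ρ m = A / (m - d)`, the `k`-th coefficient of the series is
`n * (ρ (n - k) / ρ n - 1) = k + k * (k + d) / (n - k - d)`. It tends to `k` as `n → ∞`, and since
`|m - d| ≥ c := dist(d, ℤ) > 0` for every integer `m`, it is bounded uniformly in `n` by
`|k| + (k ^ 2 + |d| * |k|) / c`. The hypothesis on `s` makes this bound summable against `‖s k‖`,
so dominated convergence for series applies.
-/

lemma exists_pos_le_abs_intCast_sub {d : ℝ} (hd : ∀ m : ℤ, (m : ℝ) ≠ d) :
    ∃ c > 0, ∀ m : ℤ, c ≤ |(m : ℝ) - d| := by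
  have hclosed := Int.isClosedEmbedding_coe_real.isClosed_range
  refine ⟨Metric.infDist d (Set.range ((↑) : ℤ → ℝ)),
    (hclosed.notMem_iff_infDist_pos ⟨0, 0, Int.cast_zero⟩).1 (by rintro ⟨m, hm⟩; exact hd m hm),
    fun m => ?_⟩
  rw [abs_sub_comm, ← Real.dist_eq]
  exact Metric.infDist_le_dist_of_mem ⟨m, rfl⟩

lemma intCast_ne_of_abs_lt_half {d : ℝ} (hd : |d| < 1 / 2) (hd0 : d ≠ 0) (m : ℤ) :
    (m : ℝ) ≠ d := by
  rintro rfl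
  have : |m| < 1 := by exact_mod_cast hd.trans (by norm_num : (1 / 2 : ℝ) < 1)
  exact hd0 (by simp [Int.abs_lt_one_iff.1 this])

lemma summable_abs_pow_mul_of_le {f : ℤ → ℝ} {i j : ℕ} (hij : i ≤ j) (hf : ∀ k, 0 ≤ f k)
    (h : Summable fun k : ℤ => |(k : ℝ)| ^ j * f k) :
    Summable fun k : ℤ => |(k : ℝ)| ^ i * f k := by
  refine h.of_norm_bounded_eventually ((Set.finite_singleton 0).subset fun k hk => ?_)
  by_contra hk0
  have h1 : (1 : ℝ) ≤ |(k : ℝ)| := by exact_mod_cast Int.one_le_abs hk0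
  apply hk
  change ‖_‖ ≤ _
  rw [Real.norm_of_nonneg (mul_nonneg (by positivity) (hf k))]
  exact mul_le_mul_of_nonneg_right (pow_le_pow_right₀ h1 hij) (hf k)

lemma mul_inv_div_mul_div_sub_one {A d x y : ℝ} (hA : A ≠ 0) (hy : x - y - d ≠ 0) :
    x * ((A / (x - d))⁻¹ * (A / (x - y - d)) - 1) = y + y * (y + d) / (x - y - d) := by
  field_simp
  ring

lemma abs_add_mul_div_le {y d z c : ℝ} (hc : 0 < c) (hz : c ≤ |z|) :
    |y + y * (y + d) / z| ≤ |y| + (y ^ 2 + |d| * |y|) / c := by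
  calc |y + y * (y + d) / z| ≤ |y| + |y| * |y + d| / |z| := by
        rw [← abs_mul, ← abs_div]; exact abs_add_le _ _
    _ ≤ |y| + |y| * (|y| + |d|) / c := by gcongr; exact abs_add_le _ _
    _ = |y| + (y ^ 2 + |d| * |y|) / c := by rw [← sq_abs y]; ring

lemma tendsto_add_mul_div_natCast_sub (y d : ℝ) :
    Tendsto (fun n : ℕ => y + y * (y + d) / (n - y - d)) atTop (𝓝 y) := by
  have hden : Tendsto (fun n : ℕ => (n : ℝ) - y - d) atTop atTop := by
    simpa only [sub_sub, ← sub_eq_add_neg] using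
      tendsto_atTop_add_const_right atTop (-(y + d)) tendsto_natCast_atTop_atTop
  simpa using tendsto_const_nhds.add (tendsto_const_nhds.div_atTop hden)

section

variable {A d c : ℝ} {ρ : ℤ → ℝ}

lemma summable_ofReal_comp_sub_mul (hρ : ∀ m : ℤ, ρ m = A / (m - d)) (hc : 0 < c)
    (hcd : ∀ m : ℤ, c ≤ |(m : ℝ) - d|) {s : ℤ → ℂ} (hs : Summable fun k => ‖s k‖) (n : ℤ) :
    Summable fun k => ((ρ (n - k) : ℝ) : ℂ) * s k := by
  refine .of_norm ((hs.mul_left (|A| / c)).of_nonneg_of_le (fun _ => norm_nonneg _) fun k => ?_)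
  rw [norm_mul, Complex.norm_real, Real.norm_eq_abs, hρ, abs_div]
  gcongr
  exact hcd _

lemma natCast_mul_inv_mul_tsum_sub_tsum (hρ : ∀ m : ℤ, ρ m = A / (m - d)) (hc : 0 < c)
    (hcd : ∀ m : ℤ, c ≤ |(m : ℝ) - d|) (hA : A ≠ 0) {s : ℤ → ℂ}
    (hs : Summable fun k => ‖s k‖) (n : ℕ) :
    (n : ℂ) * (((ρ n : ℝ) : ℂ)⁻¹ * ∑' k : ℤ, ((ρ ((n : ℤ) - k) : ℝ) : ℂ) * s k - ∑' k : ℤ, s k)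
      = ∑' k : ℤ, (((k : ℝ) + k * (k + d) / (n - k - d) : ℝ) : ℂ) * s k := by
  rw [← tsum_mul_left,
    ← ((summable_ofReal_comp_sub_mul hρ hc hcd hs n).mul_left _).tsum_sub hs.of_norm,
    ← tsum_mul_left]
  refine tsum_congr fun k => ?_
  have hden : (n : ℝ) - k - d ≠ 0 := by
    have := (hc.trans_le (hcd (n - k))).ne'
    push_cast at this
    exact abs_ne_zero.1 this
  rw [← mul_inv_div_mul_div_sub_one hA hden, hρ, hρ]
  push_cast
  ring

theorem tendsto_natCast_mul_inv_mul_tsum_sub_tsum (hρ : ∀ m : ℤ, ρ m = A / (m - d))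
    (hA : A ≠ 0) (hd : ∀ m : ℤ, (m : ℝ) ≠ d) {s : ℤ → ℂ}
    (hs : Summable fun k : ℤ => (k : ℝ) ^ 2 * ‖s k‖) :
    Tendsto
      (fun n : ℕ => (n : ℂ) * (((ρ n : ℝ) : ℂ)⁻¹ * ∑' k : ℤ, ((ρ ((n : ℤ) - k) : ℝ) : ℂ) * s k
        - ∑' k : ℤ, s k))
      atTop (𝓝 (∑' k : ℤ, (k : ℂ) * s k)) := by
  obtain ⟨c, hc, hcd⟩ := exists_pos_le_abs_intCast_sub hd
  have hs2 : Summable fun k : ℤ => |(k : ℝ)| ^ 2 * ‖s k‖ := by simpa only [sq_abs] using hs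
  have hs1 := summable_abs_pow_mul_of_le (by norm_num : 1 ≤ 2) (fun k => norm_nonneg (s k)) hs2
  have hs0 := summable_abs_pow_mul_of_le (by norm_num : 0 ≤ 2) (fun k => norm_nonneg (s k)) hs2
  simp only [pow_one, pow_zero, one_mul] at hs1 hs0
  simp_rw [natCast_mul_inv_mul_tsum_sub_tsum hρ hc hcd hA hs0]
  refine tendsto_tsum_of_dominated_convergence
    (bound := fun k : ℤ => (|(k : ℝ)| + ((k : ℝ) ^ 2 + |d| * |(k : ℝ)|) / c) * ‖s k‖)
    ?_ (fun k => ?_) (.of_forall fun n k => ?_)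
  · exact (hs1.add ((hs.add (hs1.mul_left |d|)).div_const c)).congr fun k => by ring
  · have := ((Complex.continuous_ofReal.tendsto _).comp
      (tendsto_add_mul_div_natCast_sub (k : ℝ) d)).mul_const (s k)
    simpa using this
  · rw [norm_mul, Complex.norm_real, Real.norm_eq_abs]
    gcongr
    refine abs_add_mul_div_le hc ?_
    simpa using hcd (n - k)

end

lemma Real.sin_pi_mul_ne_zero {d : ℝ} (hd : ∀ m : ℤ, (m : ℝ) ≠ d) : Real.sin (Real.pi * d) ≠ 0 :=
  Real.sin_ne_zero_iff.2 fun m hm =>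
    hd m (mul_left_cancel₀ Real.pi_ne_zero (by rw [← hm, mul_comm]))

theorem rho_convolution_limit (d : ℝ) (hd : d ∈ Set.Ioo (-(1/2) : ℝ) (1/2)) (hd0 : d ≠ 0)
    (ρ : ℤ → ℝ) (hρ : ∀ m : ℤ, ρ m = Real.sin (Real.pi * d) / (Real.pi * ((m : ℝ) - d)))
    (s : ℤ → ℂ) (hs : Summable (fun k : ℤ => (k : ℝ)^2 * ‖s k‖)) :
    Tendsto
      (fun n : ℕ =>
        (n : ℂ) * (((ρ n : ℝ) : ℂ)⁻¹ * ∑' k : ℤ, ((ρ ((n : ℤ) - k) : ℝ) : ℂ) * s k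
          - ∑' k : ℤ, s k))
      atTop (nhds (∑' k : ℤ, (k : ℂ) * s k)) := by
  have hdZ := intCast_ne_of_abs_lt_half (abs_lt.2 hd) hd0
  refine tendsto_natCast_mul_inv_mul_tsum_sub_tsum (fun m => ?_)
    (div_ne_zero (Real.sin_pi_mul_ne_zero hdZ) Real.pi_ne_zero) hdZ hs
  rw [hρ, div_mul_eq_div_div]
end
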